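/- arXiv:math/9911119 — 3 statements merged into one kernel-verified Lean document; each statement's English description precedes it below -/
import Mathlib

section
/- Let Φ be a symmetric real n×n matrix that is negative definite, satisfies Φ_{ij} ≥ 0 for all i ≠ j, and is irreducible in the sense that there is no partition of the index set {1,…,n} into two nonempty subsets I and J with Φ_{ij} = 0 for all i ∈ I and j ∈ J. Then every entry of the inverse matrix Φ^{-1} is strictly negative. -/
open Matrix

/-- A symmetric negative definite real matrix with nonnegative off-diagonal entries which
is irreducible (there is no partition of the index set into two nonempty parts that do not
interact) has an inverse all of whose entries are strictly negative.  (Section 2.2 of the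
paper: the intersection matrix of a connected negative definite curve.) -/
theorem inv_entries_neg_of_negDef_irreducible
    {n : ℕ} (Φ : Matrix (Fin n) (Fin n) ℝ)
    (hsymm : Φ.IsSymm)
    (hneg : ∀ x : Fin n → ℝ, x ≠ 0 → x ⬝ᵥ (Φ *ᵥ x) < 0)
    (hoff : ∀ i j : Fin n, i ≠ j → 0 ≤ Φ i j)
    (hirr : ¬ ∃ I : Set (Fin n), I.Nonempty ∧ Iᶜ.Nonempty ∧
      ∀ i ∈ I, ∀ j ∈ Iᶜ, Φ i j = 0) :
    ∀ i j : Fin n, Φ⁻¹ i j < 0 := by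
  -- Φ is invertible
  have hinj : Function.Injective (Φ.mulVec) := by
    intro a b hab
    by_contra hne
    have h0 : Φ *ᵥ (a - b) = 0 := by
      rw [mulVec_sub, hab, sub_self]
    have := hneg (a - b) (sub_ne_zero.mpr hne)
    rw [h0] at this
    simp at this
  have hunit : IsUnit Φ := (Matrix.mulVec_injective_iff_isUnit).1 hinj
  have hdet : IsUnit Φ.det := (Matrix.isUnit_iff_isUnit_det Φ).1 hunit
  have hmul : Φ * Φ⁻¹ = 1 := Matrix.mul_nonsing_inv Φ hdet
  intro i₀ j
  -- x is column j of Φ⁻¹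
  set x : Fin n → ℝ := fun i => Φ⁻¹ i j with hx
  have hcol : Φ *ᵥ x = fun i => (1 : Matrix (Fin n) (Fin n) ℝ) i j := by
    funext i
    simp only [mulVec, dotProduct, hx]
    rw [← hmul]
    simp [Matrix.mul_apply]
  -- Step 1: x ≤ 0
  have hle : ∀ i, x i ≤ 0 := by
    by_contra hpos
    push_neg at hpos
    set y : Fin n → ℝ := fun i => max (x i) 0 with hy
    have hyne : y ≠ 0 := by
      obtain ⟨i, hi⟩ := hpos
      intro h
      have := congrFun h i
      simp only [hy, Pi.zero_apply] at this
      have : x i ≤ 0 := by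
        rw [max_eq_right_iff] at this
        · linarith [this]
      linarith
    have hy0 : ∀ i, 0 ≤ y i := fun i => le_max_right _ _
    have hyx : ∀ i, y i * (y i - x i) = 0 := by
      intro i
      rcases le_or_gt (x i) 0 with h | h
      · simp [hy, max_eq_right h]
      · simp [hy, max_eq_left h.le]
    -- y ⬝ Φ y = y ⬝ Φ x + y ⬝ Φ (y - x)
    have key : (0:ℝ) ≤ y ⬝ᵥ (Φ *ᵥ y) := by
      have h1 : y ⬝ᵥ (Φ *ᵥ y) = y ⬝ᵥ (Φ *ᵥ x) + y ⬝ᵥ (Φ *ᵥ (y - x)) := by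
        rw [← dotProduct_add, ← mulVec_add]
        congr 1
        funext i; simp
      have h2 : (0:ℝ) ≤ y ⬝ᵥ (Φ *ᵥ x) := by
        rw [hcol]
        simp only [dotProduct, Matrix.one_apply]
        apply Finset.sum_nonneg
        intro i _
        rcases eq_or_ne i j with h | h
        · simpa [h] using hy0 j
        · simp [h]
      have h3 : (0:ℝ) ≤ y ⬝ᵥ (Φ *ᵥ (y - x)) := by
        simp only [dotProduct, mulVec]
        apply Finset.sum_nonneg
        intro i _
        rw [Finset.mul_sum]
        apply Finset.sum_nonneg
        intro k _
        rcases eq_or_ne i k with h | h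
        · subst h
          have heq : y i * (Φ i i * (y i - x i)) = Φ i i * (y i * (y i - x i)) := by ring
          simp only [Pi.sub_apply]
          rw [heq, hyx i, mul_zero]
        · have h4 : 0 ≤ y k - x k := by
            simp only [hy]
            rcases le_or_gt (x k) 0 with h | h
            · rw [max_eq_right h]; linarith
            · rw [max_eq_left h.le]; linarith
          have := hoff i k h
          simp only [Pi.sub_apply]
          positivity
      linarith
    exact absurd key (not_le.mpr (hneg y hyne))
  -- Step 2: strict
  by_contra hge
  push_neg at hge
  have hi0 : x i₀ = 0 := le_antisymm (hle i₀) hge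
  set I : Set (Fin n) := {i | x i = 0} with hI
  have hxne : x ≠ 0 := by
    intro h
    have := congrFun hcol j
    rw [h, mulVec_zero] at this
    simp [Matrix.one_apply] at this
  apply hirr
  refine ⟨I, ⟨i₀, hi0⟩, ?_, ?_⟩
  · obtain ⟨k, hk⟩ : ∃ k, x k ≠ 0 := by
      by_contra h; push_neg at h; exact hxne (funext h)
    exact ⟨k, hk⟩
  · intro i hi k hk
    have hik : i ≠ k := by
      intro h; subst h; exact hk hi
    have hxk : x k < 0 := lt_of_le_of_ne (hle k) (fun h => hk h)
    -- sum over k of Φ i k * x k = (1) i j ≥ 0, all terms ≤ 0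
    have hsum : ∑ m, Φ i m * x m = (1 : Matrix (Fin n) (Fin n) ℝ) i j := by
      have := congrFun hcol i
      simpa [mulVec, dotProduct] using this
    have hterms : ∀ m ∈ Finset.univ, Φ i m * x m ≤ 0 := by
      intro m _
      rcases eq_or_ne (x m) 0 with h | h
      · simp [h]
      · have hxm : x m < 0 := lt_of_le_of_ne (hle m) h
        have him : i ≠ m := by
          intro he; subst he; exact h hi
        have := hoff i m him
        nlinarith
    have hsum0 : ∑ m, Φ i m * x m = 0 := by
      have hle' : ∑ m, Φ i m * x m ≤ 0 := Finset.sum_nonpos hterms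
      have hge' : 0 ≤ ∑ m, Φ i m * x m := by
        rw [hsum]
        rcases eq_or_ne i j with h | h
        · subst h; rw [Matrix.one_apply_eq]; norm_num
        · rw [Matrix.one_apply_ne h]
      linarith
    have := (Finset.sum_eq_zero_iff_of_nonpos hterms).1 hsum0 k (Finset.mem_univ k)
    rcases mul_eq_zero.1 this with h | h
    · exact h
    · exact absurd h (ne_of_lt hxk)
end

section
/- Let Φ be a symmetric real n×n matrix that is negative definite and satisfies Φ_{ij} ≥ 0 for all i ≠ j. If x is a real vector such that every entry of the vector Φx is ≤ 0, then every entry of x is ≥ 0. -/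
open Matrix

/-- Monotonicity property of symmetric negative definite matrices with nonnegative
off-diagonal entries: if every entry of `Φ *ᵥ x` is nonpositive, then every entry of `x`
is nonnegative.  (Used in the proof of Theorem 3.5 of the paper: a divisor supported on a
negative definite curve `R` meeting each component of `R` nonpositively is effective.) -/
theorem nonneg_of_mulVec_nonpos
    {n : ℕ} (Φ : Matrix (Fin n) (Fin n) ℝ)
    (hsymm : Φ.IsSymm)
    (hneg : ∀ x : Fin n → ℝ, x ≠ 0 → x ⬝ᵥ (Φ *ᵥ x) < 0)
    (hoff : ∀ i j : Fin n, i ≠ j → 0 ≤ Φ i j)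
    (x : Fin n → ℝ) (hx : ∀ i, (Φ *ᵥ x) i ≤ 0) :
    ∀ i, 0 ≤ x i := by
  set m : Fin n → ℝ := fun i => max (-(x i)) 0 with hm
  set p : Fin n → ℝ := fun i => max (x i) 0 with hp
  have hmn : ∀ i, 0 ≤ m i := fun i => le_max_right _ _
  have hpn : ∀ i, 0 ≤ p i := fun i => le_max_right _ _
  have hmp0 : ∀ i, m i * p i = 0 := by
    intro i
    rcases le_total (x i) 0 with h | h
    · simp [hm, hp, max_eq_right h]
    · simp [hm, hp, max_eq_right (neg_nonpos_of_nonneg h)]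
  have hmx : m = p - x := by
    funext i
    simp only [Pi.sub_apply, hm, hp]
    rcases le_total (x i) 0 with h | h
    · rw [max_eq_left (neg_nonneg.mpr h), max_eq_right h]; ring
    · rw [max_eq_right (neg_nonpos_of_nonneg h), max_eq_left h]; ring
  have h1 : 0 ≤ m ⬝ᵥ (Φ *ᵥ p) := by
    unfold dotProduct mulVec dotProduct
    apply Finset.sum_nonneg
    intro i _
    rw [Finset.mul_sum]
    apply Finset.sum_nonneg
    intro j _
    by_cases hij : i = j
    · subst hij
      have : m i * (Φ i i * p i) = Φ i i * (m i * p i) := by ring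
      rw [this, hmp0 i, mul_zero]
    · exact mul_nonneg (hmn i) (mul_nonneg (hoff i j hij) (hpn j))
  have h2 : m ⬝ᵥ (Φ *ᵥ x) ≤ 0 := by
    apply Finset.sum_nonpos
    intro i _
    exact mul_nonpos_of_nonneg_of_nonpos (hmn i) (hx i)
  have hmm : 0 ≤ m ⬝ᵥ (Φ *ᵥ m) := by
    have : m ⬝ᵥ (Φ *ᵥ m) = m ⬝ᵥ (Φ *ᵥ p) - m ⬝ᵥ (Φ *ᵥ x) := by
      rw [hmx, mulVec_sub, dotProduct_sub]
    rw [this]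
    linarith
  have hm0 : m = 0 := by
    by_contra h
    exact absurd hmm (not_le.mpr (hneg m h))
  intro i
  have : m i = 0 := by rw [hm0]; rfl
  simp only [hm, max_eq_right_iff] at this
  -- this : max (-(x i)) 0 = 0 means -(x i) ≤ 0
  have h' : -(x i) ≤ 0 := by
    by_contra hc
    push_neg at hc
    have := congrFun hm0 i
    simp only [hm, Pi.zero_apply] at this
    rw [max_eq_left hc.le] at this
    linarith
  linarith
end

section
/- Let Φ be a symmetric real n×n matrix that is negative definite and satisfies Φ_{ij} ≥ 0 for all i ≠ j. Then there exists a real vector x with x_i ≥ 0 for all i such that every entry of Φx is strictly negative. Moreover, if Φ is irreducible in the sense that there is no partition of the index set {1,…,n} into two nonempty subsets I and J with Φ_{ij} = 0 for all i ∈ I and j ∈ J, then x can be chosen with x_i > 0 for all i. -/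
open Matrix

private lemma aux_mulVec_nonneg {n : ℕ} (Φ : Matrix (Fin n) (Fin n) ℝ)
    (hoff : ∀ i j : Fin n, i ≠ j → 0 ≤ Φ i j)
    (v : Fin n → ℝ) (hv : ∀ j, 0 ≤ v j) (i : Fin n) (hvi : v i = 0) :
    0 ≤ (Φ *ᵥ v) i := by
  have h : (Φ *ᵥ v) i = ∑ j, Φ i j * v j := rfl
  rw [h]
  apply Finset.sum_nonneg
  intro j _
  by_cases hji : j = i
  · subst hji; simp [hvi]
  · exact mul_nonneg (hoff i j (Ne.symm hji)) (hv j)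

/-- For a symmetric negative definite real matrix `Φ` with nonnegative off-diagonal
entries there is a nonnegative vector `x` with `Φ *ᵥ x` entrywise strictly negative;
if moreover `Φ` is irreducible, then `x` can be chosen entrywise strictly positive.
(Used in the proof of Theorem 3.5 of the paper: existence of an effective divisor
supported by a negative definite curve which is anti-ample on the curve.) -/
theorem exists_nonneg_vec_mulVec_neg
    {n : ℕ} (Φ : Matrix (Fin n) (Fin n) ℝ)
    (hsymm : Φ.IsSymm)
    (hneg : ∀ x : Fin n → ℝ, x ≠ 0 → x ⬝ᵥ (Φ *ᵥ x) < 0)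
    (hoff : ∀ i j : Fin n, i ≠ j → 0 ≤ Φ i j) :
    (∃ x : Fin n → ℝ, (∀ i, 0 ≤ x i) ∧ ∀ i, (Φ *ᵥ x) i < 0) ∧
    ((¬ ∃ I : Set (Fin n), I.Nonempty ∧ Iᶜ.Nonempty ∧
        ∀ i ∈ I, ∀ j ∈ Iᶜ, Φ i j = 0) →
      ∃ x : Fin n → ℝ, (∀ i, 0 < x i) ∧ ∀ i, (Φ *ᵥ x) i < 0) := by
  have hinj : Function.Injective Φ.mulVecLin := by
    intro a b hab
    by_contra hne
    have hsub : Φ *ᵥ (a - b) = 0 := by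
      rw [Matrix.mulVec_sub]
      have : Φ *ᵥ a = Φ *ᵥ b := by
        simpa [Matrix.mulVecLin_apply] using hab
      simp [this]
    have h := hneg (a - b) (sub_ne_zero.mpr hne)
    rw [hsub] at h
    simp at h
  have hsurj := LinearMap.injective_iff_surjective.mp hinj
  obtain ⟨x, hx⟩ := hsurj (fun _ => (-1 : ℝ))
  have hx1 : ∀ i, (Φ *ᵥ x) i = -1 := by
    intro i
    have h : Φ *ᵥ x = fun _ => -1 := hx
    rw [h]
  have hxnn : ∀ i, 0 ≤ x i := by
    by_contra hcon
    push_neg at hcon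
    obtain ⟨i₀, hi₀⟩ := hcon
    set m : Fin n → ℝ := fun i => max (-x i) 0 with hm
    set p : Fin n → ℝ := fun i => max (x i) 0 with hp
    have hmnn : ∀ i, 0 ≤ m i := fun i => le_max_right _ _
    have hpnn : ∀ i, 0 ≤ p i := fun i => le_max_right _ _
    have hpm : m = p - x := by
      funext i
      simp only [hm, hp, Pi.sub_apply]
      rcases le_total (x i) 0 with h | h
      · rw [max_eq_left (neg_nonneg.mpr h), max_eq_right h]; ring
      · rw [max_eq_right (neg_nonpos.mpr h), max_eq_left h]; ring
    have hm0 : m ≠ 0 := by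
      intro h
      have : m i₀ = 0 := by rw [h]; rfl
      have : (0:ℝ) < m i₀ := by
        simp only [hm]; exact lt_max_of_lt_left (by linarith)
      linarith
    have hΦm : ∀ i, (Φ *ᵥ m) i = (Φ *ᵥ p) i + 1 := by
      intro i
      rw [hpm, Matrix.mulVec_sub]
      simp [hx1 i]
    have hterm : ∀ i, 0 ≤ m i * ((Φ *ᵥ p) i + 1) := by
      intro i
      rcases (hmnn i).lt_or_eq with h | h
      · have hxi : x i < 0 := by
          by_contra hx0
          push_neg at hx0
          have : m i = 0 := by
            simp only [hm]; rw [max_eq_right (neg_nonpos.mpr hx0)]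
          linarith
        have hpi : p i = 0 := by
          simp only [hp]; rw [max_eq_right hxi.le]
        have h0 := aux_mulVec_nonneg Φ hoff p hpnn i hpi
        nlinarith
      · rw [← h]; ring_nf; simp
    have hpos : 0 < m i₀ * ((Φ *ᵥ p) i₀ + 1) := by
      have hmi : 0 < m i₀ := by
        simp only [hm]; exact lt_max_of_lt_left (by linarith)
      have hpi : p i₀ = 0 := by
        simp only [hp]; rw [max_eq_right hi₀.le]
      have h0 := aux_mulVec_nonneg Φ hoff p hpnn i₀ hpi
      nlinarith
    have hdot : m ⬝ᵥ (Φ *ᵥ m) = ∑ i, m i * ((Φ *ᵥ p) i + 1) := by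
      unfold dotProduct
      exact Finset.sum_congr rfl fun i _ => by rw [hΦm i]
    have hgt : 0 < m ⬝ᵥ (Φ *ᵥ m) := by
      rw [hdot]
      exact Finset.sum_pos' (fun i _ => hterm i) ⟨i₀, Finset.mem_univ i₀, hpos⟩
    have := hneg m hm0
    linarith
  have hxpos : ∀ i, 0 < x i := by
    intro i
    rcases (hxnn i).lt_or_eq with h | h
    · exact h
    · exfalso
      have h0 := aux_mulVec_nonneg Φ hoff x hxnn i h.symm
      rw [hx1 i] at h0
      linarith
  constructor
  · exact ⟨x, fun i => (hxpos i).le, fun i => by rw [hx1 i]; norm_num⟩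
  · exact fun _ => ⟨x, hxpos, fun i => by rw [hx1 i]; norm_num⟩
end
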